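/- Let N ≥ 1 and let p_{ij}, d_{ij} : ℝ^N → ℝ (1 ≤ i,j ≤ N) be nonnegative, twice continuously differentiable functions with p_{ij}(z) = d_{ji}(z) and p_{ii}(z) = d_{ii}(z) = 0 for all z. Set P_i = Σ_j p_{ij}, D_i = Σ_j d_{ij}. Let y : [t_n, t_n + T] → ℝ^N solve y_i' = P_i(y) − D_i(y) with y(t_n) = yⁿ, all yⁿ_i > 0. Let a21, b1, b2 ≥ 0 with b1 + b2 = 1 and a21·b2 = 1/2. Suppose π, σ : (0,T) → ℝ^N take positive values and satisfy π_i(Δt) = yⁿ_i + O(Δt) and σ_i(Δt) = yⁿ_i + Δt·(P_i(yⁿ) − D_i(yⁿ)) + O(Δt²) as Δt → 0⁺. Define Y2 : (0,T) → ℝ^N by the explicit formula Y2_i(Δt) = (yⁿ_i + a21·Δt·P_i(yⁿ)) / (1 + a21·Δt·D_i(yⁿ)/π_i(Δt)), and suppose Y : (0,T) → ℝ^N satisfies, for every Δt ∈ (0,T) and every i, Y_i = yⁿ_i + Δt Σ_j ( (b1·p_{ij}(yⁿ) + b2·p_{ij}(Y2))·Y_j/σ_j − (b1·d_{ij}(yⁿ)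 + b2·d_{ij}(Y2))·Y_i/σ_i ). Then Y_i(Δt) = y_i(t_n + Δt) + O(Δt³) as Δt → 0⁺ for every i. (Sufficiency of the order conditions for second-order accuracy of two-stage MPRK schemes with non-conservative stage, δ = 0.) -/

import Mathlib

/-- `f(Δt) = O(Δt^m)` as `Δt → 0⁺`. -/
def BigOAtZero (f : ℝ → ℝ) (m : ℕ) : Prop :=
  ∃ C > 0, ∃ δ > 0, ∀ t : ℝ, 0 < t → t < δ → |f t| ≤ C * t ^ m

/-!
Both sides are expanded to second order around `yⁿ`, with `F = P - D`. Along the ODE, integrating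
three times gives `y(tₙ + t) = yⁿ + t F + t²/2 F' F + O(t³)`. In the scheme, the Patankar stage `Y2`
differs from the Euler stage `yⁿ + a21 t F` by `O(t²)`, so by Taylor's formula and the order
conditions `b1 + b2 = 1`, `a21 b2 = 1/2` the weighted production–destruction sum with unit ratios is
`F + t/2 F' F + O(t²)`. The implicit update stays within `O(t)` of `yⁿ`, and its Patankar ratios
`Y / σ` are `1 + O(tᵏ)` whenever `Y - σ = O(tᵏ)`; bootstrapping from `k = 1` to `k = 2` gives
`Y = yⁿ + t F + t²/2 F' F + O(t³)`.
-/

open Set Filter Topology Asymptotics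

theorem bigOAtZero_iff_isBigO {f : ℝ → ℝ} {m : ℕ} :
    BigOAtZero f m ↔ f =O[𝓝[>] 0] (· ^ m) := by
  constructor
  · rintro ⟨C, -, δ, hδ, h⟩
    refine .of_bound C ?_
    filter_upwards [Ioo_mem_nhdsGT hδ] with t ht
    rw [Real.norm_eq_abs, Real.norm_eq_abs, abs_of_pos (pow_pos ht.1 m)]
    exact h t ht.1 ht.2
  · intro h
    obtain ⟨C, hC, hCf⟩ := h.exists_pos
    obtain ⟨δ, hδ, hsub⟩ := mem_nhdsGT_iff_exists_Ioo_subset.1 hCf.bound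
    refine ⟨C, hC, δ, hδ, fun t ht htδ => ?_⟩
    have := hsub ⟨ht, htδ⟩
    simp only [mem_ofPred_eq, Real.norm_eq_abs, abs_of_pos (pow_pos ht m)] at this
    exact this

section SmallTime

variable {E : Type*} [NormedAddCommGroup E] {l : Filter ℝ} {x : E} {u : ℝ → E}

theorem tendsto_of_isBigO_sub (hl : l ≤ 𝓝 0) (hu : (fun t => u t - x) =O[l] (· ^ 1)) :
    Tendsto u l (𝓝 x) :=
  tendsto_sub_nhds_zero_iff.1
    (hu.trans_tendsto (((continuous_pow 1).tendsto' 0 0 (by simp)).mono_left hl))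

theorem isBigO_sub_of_isBigO_sub_sub_smul [NormedSpace ℝ E] {v : E} (hl : l ≤ 𝓝 0)
    (hu : (fun t => u t - x - t • v) =O[l] (· ^ 2)) :
    (fun t => u t - x) =O[l] (· ^ 1) := by
  have hv : (fun t : ℝ => t • v) =O[l] (· ^ 1) :=
    .of_bound ‖v‖ (.of_forall fun t => by simp [norm_smul, mul_comm])
  exact ((hu.trans ((isLittleO_pow_pow one_lt_two).isBigO.mono hl)).add hv).congr_left
    fun t => by simp

/-- The term `|t| K ‖u‖` is absorbed into the left-hand side once `|t| K ≤ 1/2`. -/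
theorem isBigO_sub_of_norm_sub_le (hl : l ≤ 𝓝 0) {K : ℝ → ℝ}
    (hK : K =O[l] (fun _ => (1 : ℝ))) (hu : ∀ᶠ t in l, ‖u t - x‖ ≤ |t| * K t * ‖u t‖) :
    (fun t => u t - x) =O[l] (· ^ 1) := by
  obtain ⟨c, hc, hcK⟩ := hK.exists_pos
  refine .of_bound (2 * c * ‖x‖) ?_
  filter_upwards [hu, hcK.bound, hl (Metric.ball_mem_nhds 0 (by positivity : 0 < 1 / (2 * c)))]
    with t hut hKt ht
  rw [mem_ball_zero_iff, Real.norm_eq_abs] at ht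
  simp only [norm_one, mul_one, Real.norm_eq_abs, pow_one] at hKt ⊢
  have htK : |t| * K t ≤ |t| * c := mul_le_mul_of_nonneg_left (le_of_abs_le hKt) (abs_nonneg t)
  have htc : |t| * c ≤ 1 / 2 := by
    rw [lt_div_iff₀ (by positivity)] at ht
    linarith
  have hux : ‖u t‖ ≤ 2 * ‖x‖ := by
    have := norm_le_norm_add_norm_sub' (u t) x
    nlinarith [norm_nonneg (u t)]
  calc ‖u t - x‖ ≤ |t| * K t * ‖u t‖ := hut
    _ ≤ |t| * c * (2 * ‖x‖) := by gcongr
    _ = 2 * c * ‖x‖ * |t| := by ring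

end SmallTime

theorem isBigO_sub_pow_succ_of_hasDerivWithinAt {E : Type*} [NormedAddCommGroup E]
    [NormedSpace ℝ E] {φ w : ℝ → E} {T : ℝ} {k : ℕ} (hT : 0 < T)
    (hφ : ∀ s ∈ Icc 0 T, HasDerivWithinAt φ (w s) (Icc 0 T) s)
    (hw : w =O[𝓝[≥] 0] (· ^ k)) :
    (fun s => φ s - φ 0) =O[𝓝[≥] 0] (· ^ (k + 1)) := by
  obtain ⟨C, hC, hCw⟩ := hw.exists_pos
  obtain ⟨δ, hδ, hsub⟩ := mem_nhdsGE_iff_exists_Ico_subset.1 hCw.bound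
  refine .of_bound C ?_
  filter_upwards [Ico_mem_nhdsGE (lt_min hδ hT)] with t ⟨ht0, htδ⟩
  have hδ' : t < δ := htδ.trans_le (min_le_left _ _)
  have hsubT : Icc 0 t ⊆ Icc 0 T := Icc_subset_Icc_right (htδ.le.trans (min_le_right _ _))
  have hbound : ∀ s ∈ Ico 0 t, ‖w s‖ ≤ C * t ^ k := fun s hs => by
    have hws : ‖w s‖ ≤ C * ‖s ^ k‖ := hsub ⟨hs.1, hs.2.trans hδ'⟩
    rw [Real.norm_eq_abs, abs_of_nonneg (pow_nonneg hs.1 k)] at hws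
    exact hws.trans (by gcongr; exact hs.1; exact hs.2.le)
  have := norm_image_sub_le_of_norm_deriv_le_segment'
    (fun s hs => (hφ s (hsubT hs)).mono hsubT) hbound t (right_mem_Icc.2 ht0)
  rw [Real.norm_eq_abs, abs_of_nonneg (pow_nonneg ht0 _), pow_succ, ← mul_assoc]
  simpa using this

section Taylor

variable {E F : Type*} [NormedAddCommGroup E] [NormedSpace ℝ E] [NormedAddCommGroup F]
  [NormedSpace ℝ F] {G : E → F} {x : E}

theorem ContDiffAt.isBigO_sub_sub_fderiv (hG : ContDiffAt ℝ 2 G x) :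
    (fun u => G u - G x - fderiv ℝ G x (u - x)) =O[𝓝 x] (fun u => ‖u - x‖ ^ 2) := by
  obtain ⟨K, s, hs, hK⟩ := (hG.fderiv_right (m := 1) le_rfl).exists_lipschitzOnWith
  have hdiff : ∀ᶠ u in 𝓝 x, DifferentiableAt ℝ G u :=
    (hG.eventually (by simp)).mono fun u hu => hu.differentiableAt (by simp)
  obtain ⟨ε, hε, hball⟩ := Metric.mem_nhds_iff.1 (inter_mem hs hdiff)
  refine .of_bound K ?_
  filter_upwards [Metric.ball_mem_nhds x hε] with u hu
  set B := Metric.closedBall x ‖u - x‖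
  have hsub : B ⊆ s ∩ {u | DifferentiableAt ℝ G u} :=
    (Metric.closedBall_subset_ball (by rwa [← dist_eq_norm])).trans hball
  have hxB : x ∈ B := Metric.mem_closedBall_self (norm_nonneg _)
  have hlip : ∀ v ∈ B, ‖fderiv ℝ G v - fderiv ℝ G x‖ ≤ K * ‖u - x‖ := fun v hv =>
    (hK.norm_sub_le (hsub hv).1 (hsub hxB).1).trans (mul_le_mul_of_nonneg_left
      (by simpa [B, dist_eq_norm] using hv : ‖v - x‖ ≤ ‖u - x‖) K.2)
  have hmvt := Convex.norm_image_sub_le_of_norm_hasFDerivWithin_le' (y := u)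
    (fun v hv => (hsub hv).2.hasFDerivAt.hasFDerivWithinAt) hlip
    (convex_closedBall x ‖u - x‖) hxB (by simp [B, dist_eq_norm])
  rw [norm_pow, norm_norm, sq, ← mul_assoc]
  exact hmvt

theorem ContDiffAt.isBigO_comp_sub_sub_smul_fderiv {v : E} {l : Filter ℝ} {u : ℝ → E}
    (hG : ContDiffAt ℝ 2 G x) (hl : l ≤ 𝓝 0) (hu : (fun t => u t - x - t • v) =O[l] (· ^ 2)) :
    (fun t => G (u t) - G x - t • fderiv ℝ G x v) =O[l] (· ^ 2) := by
  have hux := isBigO_sub_of_isBigO_sub_sub_smul hl hu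
  have hquad := (hG.isBigO_sub_sub_fderiv.comp_tendsto (tendsto_of_isBigO_sub hl hux)).trans
    ((hux.norm_left.pow 2).congr_right fun t => by rw [pow_one])
  have hlin := ((fderiv ℝ G x).isBigO_comp _ l).trans hu
  refine (hquad.add hlin).congr (fun t => ?_) (fun t => by simp)
  simp only [Function.comp_apply, map_sub, map_smul]
  abel

theorem ContDiffAt.isBigO_rk2_combination {G : E → E} {l : Filter ℝ} {u : ℝ → E}
    {a b₁ b₂ : ℝ} (hG : ContDiffAt ℝ 2 G x) (hl : l ≤ 𝓝 0) (hb : b₁ + b₂ = 1)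
    (hab : a * b₂ = 1 / 2) (hu : (fun t => u t - x - t • a • G x) =O[l] (· ^ 2)) :
    (fun t => b₁ • G x + b₂ • G (u t) - G x - t • (1 / 2 : ℝ) • fderiv ℝ G x (G x)) =O[l]
      (· ^ 2) := by
  refine ((hG.isBigO_comp_sub_sub_smul_fderiv hl hu).const_smul_left b₂).congr_left fun t => ?_
  rw [Pi.smul_apply, map_smul]
  linear_combination (norm := module) (-1 : ℝ) • hb • G x - t • hab • fderiv ℝ G x (G x)

end Taylor

theorem isBigO_ode_sub_taylor_two {E : Type*} [NormedAddCommGroup E] [NormedSpace ℝ E]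
    {F : E → E} {y : ℝ → E} {t₀ T : ℝ} (hT : 0 < T) (hF : ContDiffAt ℝ 2 F (y t₀))
    (hy : ∀ t ∈ Icc t₀ (t₀ + T), HasDerivWithinAt y (F (y t)) (Icc t₀ (t₀ + T)) t) :
    (fun s => y (t₀ + s) - y t₀ - s • F (y t₀) - (s ^ 2 / 2) • fderiv ℝ F (y t₀) (F (y t₀)))
      =O[𝓝[≥] 0] (· ^ 3) := by
  set x := y t₀
  have hz : ∀ s ∈ Icc 0 T, HasDerivWithinAt (fun s => y (t₀ + s)) (F (y (t₀ + s))) (Icc 0 T) s :=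
    fun s hs => by
      have hmaps : MapsTo (t₀ + ·) (Icc 0 T) (Icc t₀ (t₀ + T)) := fun r hr =>
        ⟨by linarith [hr.1], by linarith [hr.2]⟩
      simpa [Function.comp_def] using (hy (t₀ + s) (hmaps hs)).scomp s
        ((hasDerivAt_id' s).const_add t₀).hasDerivWithinAt hmaps
  have hzt : Tendsto (fun s => y (t₀ + s)) (𝓝[≥] 0) (𝓝 x) := by
    have := (hz 0 (left_mem_Icc.2 hT.le)).continuousWithinAt
    rwa [ContinuousWithinAt, nhdsWithin_Icc_eq_nhdsGE hT, add_zero] at this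
  have hz1 : (fun s => y (t₀ + s) - x) =O[𝓝[≥] 0] (· ^ 1) := by
    have hw := ((hF.continuousAt.tendsto.comp hzt).isBigO_one ℝ).congr_right
      (g₂ := (· ^ 0)) fun _ => (pow_zero _).symm
    simpa using isBigO_sub_pow_succ_of_hasDerivWithinAt hT hz hw
  have hz2 : (fun s => y (t₀ + s) - x - s • F x) =O[𝓝[≥] 0] (· ^ 2) := by
    have hw := ((hF.differentiableAt (by norm_num)).hasFDerivAt.isBigO_sub.comp_tendsto
      hzt).trans hz1
    refine (isBigO_sub_pow_succ_of_hasDerivWithinAt (φ := fun s => y (t₀ + s) - s • F x)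
      (w := fun s => F (y (t₀ + s)) - F x) hT (fun s hs => ?_) hw).congr_left
      fun s => by simp [x]; abel
    simpa using (hz s hs).fun_sub ((hasDerivAt_id' s).smul_const (F x)).hasDerivWithinAt
  have hw := hF.isBigO_comp_sub_sub_smul_fderiv nhdsWithin_le_nhds hz2
  refine (isBigO_sub_pow_succ_of_hasDerivWithinAt
    (φ := fun s => y (t₀ + s) - s • F x - (s ^ 2 / 2) • fderiv ℝ F x (F x)) hT
    (fun s hs => ?_) hw).congr_left fun s => by simp [x]; abel
  have hsq : HasDerivAt (fun s : ℝ => (s ^ 2 / 2) • fderiv ℝ F x (F x))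
      (s • fderiv ℝ F x (F x)) s := by
    simpa using ((hasDerivAt_pow 2 s).div_const 2).smul_const (fderiv ℝ F x (F x))
  exact ((hz s hs).fun_sub ((hasDerivAt_id' s).smul_const (F x)).hasDerivWithinAt).fun_sub
    hsq.hasDerivWithinAt |>.congr_deriv (by simp)

theorem isBigO_patankarStage {l : Filter ℝ} (hl : l ≤ 𝓝 0) {y₀ a P D : ℝ} (hy₀ : y₀ ≠ 0)
    {π : ℝ → ℝ} (hπ : (fun t => π t - y₀) =O[l] (· ^ 1)) :
    (fun t => (y₀ + a * t * P) / (1 + a * t * D / π t) - y₀ - a * t * (P - D)) =O[l]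
      (· ^ 2) := by
  have ht : Tendsto (fun t : ℝ => t) l (𝓝 0) := tendsto_id'.2 hl
  have hπt : Tendsto π l (𝓝 y₀) := tendsto_of_isBigO_sub hl hπ
  have hden : Tendsto (fun t => π t + a * t * D) l (𝓝 y₀) := by
    simpa using hπt.add ((tendsto_const_nhds.mul ht).mul_const D)
  -- The stage error is this numerator divided by `π t + a t D`.
  have hnum : (fun t => a * D * (t * (π t - y₀)) - a ^ 2 * D * (P - D) * t ^ 2) =O[l]
      (· ^ 2) := by
    refine IsBigO.sub ?_ ((isBigO_refl _ l).const_mul_left _)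
    simpa [sq] using ((isBigO_refl (fun t : ℝ => t) l).mul hπ).const_mul_left (a * D)
  have hprod := hnum.mul ((hden.inv₀ hy₀).isBigO_one ℝ)
  simp only [mul_one] at hprod
  refine hprod.congr' ?_ EventuallyEq.rfl
  filter_upwards [hπt.eventually_ne hy₀, hden.eventually_ne hy₀] with t h1 h2
  have hinv : (π t + a * t * D) * (π t + a * t * D)⁻¹ = 1 := mul_inv_cancel₀ h2
  rw [show 1 + a * t * D / π t = (π t + a * t * D) / π t by field_simp, div_div_eq_mul_div]
  linear_combination (-(y₀ + a * t * (P - D))) * hinv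

/-- `c`, `e` are the production and destruction matrices and `ρ` the Patankar ratios `y / σ`. -/
def patankarFlux {ι : Type*} [Fintype ι] (c e : ι → ι → ℝ) (ρ : ι → ℝ) : ι → ℝ :=
  fun i => ∑ j, (c i j * ρ j - e i j * ρ i)

section PatankarFlux

variable {ι : Type*} [Fintype ι]

theorem patankarFlux_add (c e : ι → ι → ℝ) (ρ ρ' : ι → ℝ) :
    patankarFlux c e (ρ + ρ') = patankarFlux c e ρ + patankarFlux c e ρ' := by
  ext i
  simp only [patankarFlux, Pi.add_apply, ← Finset.sum_add_distrib]
  exact Finset.sum_congr rfl fun j _ => by ring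

theorem patankarFlux_mul_add_mul (a b : ℝ) (c e c' e' : ι → ι → ℝ) (ρ : ι → ℝ) :
    patankarFlux (fun i j => a * c i j + b * c' i j) (fun i j => a * e i j + b * e' i j) ρ =
      a • patankarFlux c e ρ + b • patankarFlux c' e' ρ := by
  ext i
  simp only [patankarFlux, Pi.add_apply, Pi.smul_apply, smul_eq_mul, Finset.mul_sum,
    ← Finset.sum_add_distrib]
  exact Finset.sum_congr rfl fun j _ => by ring

theorem norm_patankarFlux_le (c e : ι → ι → ℝ) (ρ : ι → ℝ) :
    ‖patankarFlux c e ρ‖ ≤ Fintype.card ι * (‖c‖ + ‖e‖) * ‖ρ‖ := by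
  refine (pi_norm_le_iff_of_nonneg (by positivity)).2 fun i => ?_
  have hterm : ∀ j, ‖c i j * ρ j - e i j * ρ i‖ ≤ (‖c‖ + ‖e‖) * ‖ρ‖ := fun j => by
    have hc : ‖c i j‖ ≤ ‖c‖ := (norm_le_pi_norm (c i) j).trans (norm_le_pi_norm c i)
    have he : ‖e i j‖ ≤ ‖e‖ := (norm_le_pi_norm (e i) j).trans (norm_le_pi_norm e i)
    calc ‖c i j * ρ j - e i j * ρ i‖ ≤ ‖c i j‖ * ‖ρ j‖ + ‖e i j‖ * ‖ρ i‖ := by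
          simpa only [norm_mul] using norm_sub_le (c i j * ρ j) (e i j * ρ i)
      _ ≤ ‖c‖ * ‖ρ‖ + ‖e‖ * ‖ρ‖ := by gcongr <;> exact norm_le_pi_norm ρ _
      _ = (‖c‖ + ‖e‖) * ‖ρ‖ := by ring
  calc ‖patankarFlux c e ρ i‖ ≤ ∑ j, ‖c i j * ρ j - e i j * ρ i‖ := norm_sum_le _ _
    _ ≤ ∑ _j : ι, (‖c‖ + ‖e‖) * ‖ρ‖ := Finset.sum_le_sum fun j _ => hterm j
    _ = Fintype.card ι * (‖c‖ + ‖e‖) * ‖ρ‖ := by simp [mul_assoc]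

variable {l : Filter ℝ} {c e : ℝ → ι → ι → ℝ}

theorem isBigO_patankarFlux {ρ : ℝ → ι → ℝ} {g : ℝ → ℝ}
    (hc : c =O[l] (fun _ => (1 : ℝ))) (he : e =O[l] (fun _ => (1 : ℝ))) (hρ : ρ =O[l] g) :
    (fun t => patankarFlux (c t) (e t) (ρ t)) =O[l] g := by
  have hK := ((hc.norm_left.add he.norm_left).const_mul_left (Fintype.card ι : ℝ)).mul
    hρ.norm_left
  refine (isBigO_of_le l fun t => ?_).trans (hK.congr_right fun _ => one_mul _)
  rw [Real.norm_of_nonneg (by positivity)]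
  exact norm_patankarFlux_le _ _ _

theorem isBigO_patankarUpdate (hl : l ≤ 𝓝 0) {x v w : ι → ℝ} (hx : ∀ i, x i ≠ 0)
    {σ Y : ℝ → ι → ℝ} (hc : c =O[l] (fun _ => (1 : ℝ))) (he : e =O[l] (fun _ => (1 : ℝ)))
    (hce : (fun t => patankarFlux (c t) (e t) 1 - v - t • w) =O[l] (· ^ 2))
    (hσ : (fun t => σ t - x - t • v) =O[l] (· ^ 2))
    (hY : ∀ᶠ t in l, Y t = x + t • patankarFlux (c t) (e t) (Y t / σ t)) :
    (fun t => Y t - x - t • v - t ^ 2 • w) =O[l] (· ^ 3) := by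
  have hσx := isBigO_sub_of_isBigO_sub_sub_smul hl hσ
  have hσt := tendsto_of_isBigO_sub hl hσx
  have hσinv : (fun t => (σ t)⁻¹) =O[l] (fun _ => (1 : ℝ)) :=
    (tendsto_pi_nhds.2 fun i => (tendsto_pi_nhds.1 hσt i).inv₀ (hx i)).isBigO_one ℝ
  have hσne : ∀ᶠ t in l, ∀ i, σ t i ≠ 0 :=
    eventually_all.2 fun i => (tendsto_pi_nhds.1 hσt i).eventually_ne (hx i)
  have hYx : (fun t => Y t - x) =O[l] (· ^ 1) := by
    refine isBigO_sub_of_norm_sub_le hl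
      (((hc.norm_left.add he.norm_left).const_mul_left (Fintype.card ι : ℝ)).mul
        hσinv.norm_left |>.congr_right fun _ => mul_one 1) ?_
    filter_upwards [hY] with t hYt
    conv_lhs => rw [hYt, add_sub_cancel_left, norm_smul, Real.norm_eq_abs, div_eq_mul_inv]
    calc |t| * ‖patankarFlux (c t) (e t) (Y t * (σ t)⁻¹)‖
        ≤ |t| * (Fintype.card ι * (‖c t‖ + ‖e t‖) * (‖Y t‖ * ‖(σ t)⁻¹‖)) := by
          gcongr
          exact (norm_patankarFlux_le _ _ _).trans (by gcongr; exact norm_mul_le _ _)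
      _ = |t| * (Fintype.card ι * (‖c t‖ + ‖e t‖) * ‖(σ t)⁻¹‖) * ‖Y t‖ := by ring
  -- Writing `Y / σ = 1 + (Y - σ) / σ`, each step turns an `O(tᵏ)` error into an `O(tᵏ⁺¹)` one.
  have gain : ∀ {k : ℕ} {u : ℝ → ι → ℝ},
      (fun t => patankarFlux (c t) (e t) 1 - u t) =O[l] (· ^ k) →
      (fun t => Y t - σ t) =O[l] (· ^ k) →
      (fun t => Y t - x - t • u t) =O[l] (· ^ (k + 1)) := by
    intro k u hu hYσ
    have hρ : (fun t => Y t / σ t - 1) =O[l] (· ^ k) := by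
      refine (hYσ.mul hσinv).congr' ?_ (.of_forall fun t => mul_one _)
      filter_upwards [hσne] with t ht
      ext i
      simp [sub_mul, ht i, div_eq_mul_inv]
    refine ((isBigO_refl (fun t : ℝ => t) l).smul
      (hu.add (isBigO_patankarFlux hc he hρ))).congr' ?_ (.of_forall fun t => by simp [pow_succ'])
    filter_upwards [hY] with t hYt
    have hsplit := patankarFlux_add (c t) (e t) 1 (Y t / σ t - 1)
    rw [add_sub_cancel] at hsplit
    conv_rhs => rw [hYt, hsplit]
    simp only [smul_add, smul_sub]
    abel
  have hce1 : (fun t => patankarFlux (c t) (e t) 1 - v) =O[l] (· ^ 1) :=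
    isBigO_sub_of_isBigO_sub_sub_smul hl hce
  have hYσ2 : (fun t => Y t - σ t) =O[l] (· ^ 2) :=
    ((gain hce1 ((hYx.sub hσx).congr_left fun t => by abel)).sub hσ).congr_left
      fun t => by abel
  refine (gain (u := fun t => v + t • w) (hce.congr_left fun t => by abel) hYσ2).congr_left
    fun t => ?_
  rw [smul_add, smul_smul, ← sq]
  abel

end PatankarFlux

def pdsRhs {ι : Type*} [Fintype ι] (p d : ι → ι → (ι → ℝ) → ℝ) (z : ι → ℝ) : ι → ℝ :=
  patankarFlux (p · · z) (d · · z) 1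

section ProductionDestruction

variable {ι : Type*} [Fintype ι] {p d : ι → ι → (ι → ℝ) → ℝ}

theorem pdsRhs_apply (z : ι → ℝ) (i : ι) :
    pdsRhs p d z i = ∑ j, p i j z - ∑ j, d i j z := by
  simp [pdsRhs, patankarFlux, Finset.sum_sub_distrib]

theorem contDiff_pdsRhs {n : WithTop ℕ∞} (hp : ∀ i j, ContDiff ℝ n (p i j))
    (hd : ∀ i j, ContDiff ℝ n (d i j)) : ContDiff ℝ n (pdsRhs p d) :=
  contDiff_pi.2 fun i =>
    ContDiff.sum fun j _ => ((hp i j).mul contDiff_const).sub ((hd i j).mul contDiff_const)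

theorem isBigO_mprk22_sub_taylor_two {l : Filter ℝ} (hl : l ≤ 𝓝 0)
    (hp : ∀ i j, ContDiff ℝ 2 (p i j)) (hd : ∀ i j, ContDiff ℝ 2 (d i j)) {x : ι → ℝ}
    (hx : ∀ i, x i ≠ 0) {a b₁ b₂ : ℝ} (hb : b₁ + b₂ = 1) (hab : a * b₂ = 1 / 2)
    {π σ Y₂ Y : ℝ → ι → ℝ} (hπ : (fun t => π t - x) =O[l] (· ^ 1))
    (hσ : (fun t => σ t - x - t • pdsRhs p d x) =O[l] (· ^ 2))
    (hY₂ : ∀ᶠ t in l, ∀ i,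
      Y₂ t i = (x i + a * t * ∑ j, p i j x) / (1 + a * t * (∑ j, d i j x) / π t i))
    (hY : ∀ᶠ t in l, Y t = x + t • patankarFlux (fun i j => b₁ * p i j x + b₂ * p i j (Y₂ t))
      (fun i j => b₁ * d i j x + b₂ * d i j (Y₂ t)) (Y t / σ t)) :
    (fun t => Y t - x - t • pdsRhs p d x - (t ^ 2 / 2) • fderiv ℝ (pdsRhs p d) x (pdsRhs p d x))
      =O[l] (· ^ 3) := by
  have hY₂x : (fun t => Y₂ t - x - t • a • pdsRhs p d x) =O[l] (· ^ 2) := by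
    refine isBigO_pi.2 fun i => (isBigO_patankarStage (a := a) (P := ∑ j, p i j x)
      (D := ∑ j, d i j x) hl (hx i) (isBigO_pi.1 hπ i)).congr' ?_
      EventuallyEq.rfl
    filter_upwards [hY₂] with t ht
    simp only [Pi.sub_apply, Pi.smul_apply, smul_eq_mul, ht i, pdsRhs_apply]
    ring
  have hY₂t := tendsto_of_isBigO_sub hl (isBigO_sub_of_isBigO_sub_sub_smul hl hY₂x)
  have hcoef : ∀ q : ι → ι → (ι → ℝ) → ℝ, (∀ i j, ContDiff ℝ 2 (q i j)) →
      (fun t i j => b₁ * q i j x + b₂ * q i j (Y₂ t)) =O[l] (fun _ => (1 : ℝ)) :=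
    fun q hq => (((continuous_pi fun i => continuous_pi fun j =>
      continuous_const.add (continuous_const.mul (hq i j).continuous)).tendsto x).comp
        hY₂t).isBigO_one ℝ
  have hrk2 := (contDiff_pdsRhs hp hd).contDiffAt.isBigO_rk2_combination hl hb hab hY₂x
  refine (isBigO_patankarUpdate hl hx (hcoef p hp) (hcoef d hd)
    (w := (1 / 2 : ℝ) • fderiv ℝ (pdsRhs p d) x (pdsRhs p d x)) (hrk2.congr_left fun t => ?_)
    hσ hY).congr_left fun t => ?_
  · rw [patankarFlux_mul_add_mul]
    rfl
  · rw [smul_smul, mul_one_div]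

end ProductionDestruction

theorem stmt_18_general (N : ℕ)
    (p d : Fin N → Fin N → (Fin N → ℝ) → ℝ)
    (hpC2 : ∀ i j, ContDiff ℝ 2 (p i j)) (hdC2 : ∀ i j, ContDiff ℝ 2 (d i j))
    (P D : Fin N → (Fin N → ℝ) → ℝ)
    (hP : ∀ i z, P i z = ∑ j, p i j z) (hD : ∀ i z, D i z = ∑ j, d i j z)
    (tn T : ℝ) (hT : 0 < T)
    (y : ℝ → Fin N → ℝ)
    (hy : ∀ (i : Fin N), ∀ t ∈ Set.Icc tn (tn + T),
      HasDerivWithinAt (fun s => y s i) (P i (y t) - D i (y t)) (Set.Icc tn (tn + T)) t)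
    (yn : Fin N → ℝ) (hyn : y tn = yn) (hynpos : ∀ i, 0 < yn i)
    (a21 b1 b2 : ℝ)
    (hbsum : b1 + b2 = 1) (hab : a21 * b2 = 1 / 2)
    (piw σ : ℝ → Fin N → ℝ)
    (hpiwO : ∀ i, BigOAtZero (fun Δt => piw Δt i - yn i) 1)
    (hσO : ∀ i, BigOAtZero (fun Δt => σ Δt i - (yn i + Δt * (P i yn - D i yn))) 2)
    (Y2 Y : ℝ → Fin N → ℝ)
    (hY2 : ∀ Δt, 0 < Δt → Δt < T → ∀ i,
      Y2 Δt i = (yn i + a21 * Δt * P i yn) / (1 + a21 * Δt * D i yn / piw Δt i))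
    (hY : ∀ Δt, 0 < Δt → Δt < T → ∀ i,
      Y Δt i = yn i + Δt * ∑ j,
        ((b1 * p i j yn + b2 * p i j (Y2 Δt)) * Y Δt j / σ Δt j
          - (b1 * d i j yn + b2 * d i j (Y2 Δt)) * Y Δt i / σ Δt i)) :
    ∀ i, BigOAtZero (fun Δt => Y Δt i - y (tn + Δt) i) 3 := by
  have hF : ∀ z i, pdsRhs p d z i = P i z - D i z := fun z i => by
    rw [pdsRhs_apply, hP, hD]
  have hexact := isBigO_ode_sub_taylor_two hT (contDiff_pdsRhs hpC2 hdC2).contDiffAt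
    fun t ht => hasDerivWithinAt_pi.2 fun i => by simpa only [hF] using hy i t ht
  rw [hyn] at hexact
  have hsmall : ∀ᶠ t in 𝓝[>] (0 : ℝ), 0 < t ∧ t < T := Ioo_mem_nhdsGT hT
  have hscheme := isBigO_mprk22_sub_taylor_two nhdsWithin_le_nhds hpC2 hdC2
    (fun i => (hynpos i).ne') hbsum hab (π := piw) (σ := σ) (Y₂ := Y2) (Y := Y)
    (isBigO_pi.2 fun i => bigOAtZero_iff_isBigO.1 (hpiwO i))
    (isBigO_pi.2 fun i => (bigOAtZero_iff_isBigO.1 (hσO i)).congr_left fun t => by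
      simp only [Pi.sub_apply, Pi.smul_apply, smul_eq_mul, hF]
      ring)
    (by
      filter_upwards [hsmall] with t ht i
      rw [hY2 t ht.1 ht.2 i, hP, hD])
    (by
      filter_upwards [hsmall] with t ht
      ext i
      rw [hY t ht.1 ht.2 i]
      simp [patankarFlux, mul_div_assoc])
  intro i
  refine bigOAtZero_iff_isBigO.2 ((isBigO_pi.1 (hscheme.sub
    (hexact.mono (nhdsWithin_mono _ Ioi_subset_Ici_self))) i).congr_left fun t => ?_)
  simp

theorem stmt_18 (N : ℕ) (hN : 1 ≤ N)
    (p d : Fin N → Fin N → (Fin N → ℝ) → ℝ)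
    (hpnn : ∀ i j z, 0 ≤ p i j z) (hdnn : ∀ i j z, 0 ≤ d i j z)
    (hpC2 : ∀ i j, ContDiff ℝ 2 (p i j)) (hdC2 : ∀ i j, ContDiff ℝ 2 (d i j))
    (hcons : ∀ i j z, p i j z = d j i z)
    (hpdiag : ∀ i z, p i i z = 0) (hddiag : ∀ i z, d i i z = 0)
    (P D : Fin N → (Fin N → ℝ) → ℝ)
    (hP : ∀ i z, P i z = ∑ j, p i j z) (hD : ∀ i z, D i z = ∑ j, d i j z)
    (tn T : ℝ) (hT : 0 < T)
    (y : ℝ → Fin N → ℝ)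
    (hy : ∀ (i : Fin N), ∀ t ∈ Set.Icc tn (tn + T),
      HasDerivWithinAt (fun s => y s i) (P i (y t) - D i (y t)) (Set.Icc tn (tn + T)) t)
    (yn : Fin N → ℝ) (hyn : y tn = yn) (hynpos : ∀ i, 0 < yn i)
    (a21 b1 b2 : ℝ) (ha21 : 0 ≤ a21) (hb1 : 0 ≤ b1) (hb2 : 0 ≤ b2)
    (hbsum : b1 + b2 = 1) (hab : a21 * b2 = 1 / 2)
    (piw σ : ℝ → Fin N → ℝ)
    (hpiwpos : ∀ Δt, 0 < Δt → Δt < T → ∀ i, 0 < piw Δt i)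
    (hσpos : ∀ Δt, 0 < Δt → Δt < T → ∀ i, 0 < σ Δt i)
    (hpiwO : ∀ i, BigOAtZero (fun Δt => piw Δt i - yn i) 1)
    (hσO : ∀ i, BigOAtZero (fun Δt => σ Δt i - (yn i + Δt * (P i yn - D i yn))) 2)
    (Y2 Y : ℝ → Fin N → ℝ)
    (hY2 : ∀ Δt, 0 < Δt → Δt < T → ∀ i,
      Y2 Δt i = (yn i + a21 * Δt * P i yn) / (1 + a21 * Δt * D i yn / piw Δt i))
    (hY : ∀ Δt, 0 < Δt → Δt < T → ∀ i,
      Y Δt i = yn i + Δt * ∑ j,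
        ((b1 * p i j yn + b2 * p i j (Y2 Δt)) * Y Δt j / σ Δt j
          - (b1 * d i j yn + b2 * d i j (Y2 Δt)) * Y Δt i / σ Δt i)) :
    ∀ i, BigOAtZero (fun Δt => Y Δt i - y (tn + Δt) i) 3 :=
  stmt_18_general N p d hpC2 hdC2 P D hP hD tn T hT y hy yn hyn hynpos a21 b1 b2 hbsum hab piw σ
    hpiwO hσO Y2 Y hY2 hY
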